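/- arXiv:math/0407001 — 3 statements merged into one kernel-verified Lean document; each statement's English description precedes it below -/
import Mathlib

section
/- For a list d = (d_1, …, d_m) of positive integers and every s, the first Sylvester wave (the case j = 1, for which k_1 = m and the only first root of unity is ρ = 1) satisfies W_1(s, d) = B_{m−1}^{(m)}(s + s_m | d)/((m−1)! · π_m). -/
open PowerSeries Finset

noncomputable section

/-- Restricted partition function `W(s, d)`: the number of tuples `x` of nonnegative
integers with `∑ i, x i * d i = s`. -/
def restrictedPartition (s : ℕ) (d : List ℕ) : ℕ :=
  Set.ncard {x : Fin d.length → ℕ | ∑ i, x i * d.get i = s}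

/-- `(e^{dt} - 1)/(d t)` as a formal power series. -/
def bexpS (d : ℂ) : PowerSeries ℂ :=
  PowerSeries.mk fun k => d ^ k / (Nat.factorial (k + 1) : ℂ)

/-- Nörlund Bernoulli polynomial of higher order `B_n^{(m)}(x | d)`, defined through
the generating function `e^{xt} ∏ d_i t/(e^{d_i t} - 1) = ∑ B_n^{(m)}(x|d) t^n/n!`. -/
def NBern (n : ℕ) (x : ℂ) (d : List ℂ) : ℂ :=
  (Nat.factorial n : ℂ) *
    PowerSeries.coeff (R := ℂ) n
      (PowerSeries.rescale x (PowerSeries.exp ℂ) * ((d.map fun di => (bexpS di)⁻¹).prod))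

/-- `e^{et} - ρ^e` as a formal power series. -/
def frobS (ρ : ℂ) (e : ℕ) : PowerSeries ℂ :=
  PowerSeries.mk fun k => if k = 0 then 1 - ρ ^ e else (e : ℂ) ^ k / (Nat.factorial k : ℂ)

/-- Higher-order Eulerian (Frobenius) polynomial `H_n^{(q)}(x, ρ | e)`, defined through
the generating function `e^{xt} ∏ (1 - ρ^{e_i})/(e^{e_i t} - ρ^{e_i}) = ∑ H_n t^n/n!`. -/
def FrobH (n : ℕ) (x ρ : ℂ) (e : List ℕ) : ℂ :=
  (Nat.factorial n : ℂ) *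
    PowerSeries.coeff (R := ℂ) n
      (PowerSeries.rescale x (PowerSeries.exp ℂ) *
        ((e.map fun ei => PowerSeries.C (R := ℂ) (1 - ρ ^ ei) * (frobS ρ ei)⁻¹).prod))

/-- `k_j`, the number of elements of `d` divisible by `j`. -/
def kWeight (j : ℕ) (d : List ℕ) : ℕ := (d.filter fun di => j ∣ di).length

/-- The unit part of the factor `1 - ρ^d e^{-dt}`: if `ρ^d = 1` this factor equals
`t` times the series below, otherwise it equals the series below itself. -/
def sylFactor (ρ : ℂ) (d : ℕ) : PowerSeries ℂ :=
  if ρ ^ d = 1 then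
    PowerSeries.mk fun k => (d : ℂ) * (-(d : ℂ)) ^ k / (Nat.factorial (k + 1) : ℂ)
  else
    PowerSeries.mk fun k =>
      if k = 0 then 1 - ρ ^ d else -ρ ^ d * (-(d : ℂ)) ^ k / (Nat.factorial k : ℂ)

/-- The Sylvester wave `W_j(s, d)`: sum over primitive `j`-th roots of unity `ρ` of the
coefficient of `t^{k_j - 1}` in `t^{k_j} ρ^{-s} e^{st} / ∏ (1 - ρ^{d_i} e^{-d_i t})`. -/
def SylvesterWave (j : ℕ) (s : ℕ) (d : List ℕ) : ℂ :=
  ∑ ρ ∈ primitiveRoots j ℂ,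
    PowerSeries.coeff (R := ℂ) (kWeight j d - 1)
      ((ρ ^ s)⁻¹ • (PowerSeries.rescale (s : ℂ) (PowerSeries.exp ℂ) *
        ((d.map (sylFactor ρ)).prod)⁻¹))

/-- The prime radical circulator (Ramanujan sum) `Ψ̄_j(s) = ∑_ρ ρ^s` over primitive
`j`-th roots of unity. -/
def primeCirculator (j : ℕ) (s : ℤ) : ℂ :=
  ∑ ρ ∈ primitiveRoots j ℂ, ρ ^ s

lemma constCoeff_rescale_exp (a : ℂ) :
    PowerSeries.constantCoeff (R := ℂ) (PowerSeries.rescale a (PowerSeries.exp ℂ)) = 1 := by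
  rw [← coeff_zero_eq_constantCoeff, coeff_rescale]
  simp [PowerSeries.coeff_exp]

lemma bexpS_key (a : ℂ) :
    X * PowerSeries.C (R := ℂ) a * bexpS a = PowerSeries.rescale a (PowerSeries.exp ℂ) - 1 := by
  rw [mul_assoc]
  ext n
  cases n with
  | zero =>
    rw [coeff_zero_eq_constantCoeff]
    simp [constCoeff_rescale_exp]
  | succ n =>
    simp only [coeff_succ_X_mul, coeff_C_mul, bexpS, coeff_mk, map_sub, coeff_rescale,
      PowerSeries.coeff_exp, PowerSeries.coeff_one, Nat.succ_ne_zero, if_false, sub_zero,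
      map_div₀, map_one, map_natCast]
    ring

lemma exp_rescale_inv (a : ℂ) :
    (PowerSeries.rescale (-a) (PowerSeries.exp ℂ))⁻¹ = PowerSeries.rescale a (PowerSeries.exp ℂ) := by
  rw [PowerSeries.inv_eq_iff_mul_eq_one (by rw [constCoeff_rescale_exp]; norm_num)]
  rw [PowerSeries.exp_mul_exp_eq_exp_add]
  simp [rescale_zero]

lemma bexpS_neg (a : ℂ) (ha : a ≠ 0) :
    bexpS (-a) = PowerSeries.rescale (-a) (PowerSeries.exp ℂ) * bexpS a := by
  have hX : (X : PowerSeries ℂ) * PowerSeries.C (R := ℂ) a ≠ 0 :=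
    mul_ne_zero PowerSeries.X_ne_zero (by simpa using ha)
  apply mul_left_cancel₀ hX
  have k1 := bexpS_key (-a)
  have k2 := bexpS_key a
  have hEE : PowerSeries.rescale (-a) (PowerSeries.exp ℂ) *
      PowerSeries.rescale a (PowerSeries.exp ℂ) = 1 := by
    rw [PowerSeries.exp_mul_exp_eq_exp_add]
    simp [rescale_zero]
  rw [map_neg] at k1
  linear_combination (-1 : PowerSeries ℂ) * k1 -
    PowerSeries.rescale (-a) (PowerSeries.exp ℂ) * k2 - hEE

lemma sylFactor_one_eq (a : ℕ) (ha : 0 < a) :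
    sylFactor 1 a = PowerSeries.C (R := ℂ) (a : ℂ) *
      (PowerSeries.rescale (-(a : ℂ)) (PowerSeries.exp ℂ) * bexpS (a : ℂ)) := by
  have h1 : sylFactor 1 a = PowerSeries.C (R := ℂ) (a : ℂ) * bexpS (-(a : ℂ)) := by
    rw [sylFactor, if_pos (one_pow a)]
    ext n
    rw [coeff_C_mul]
    simp [bexpS, mul_div_assoc]
  rw [h1, bexpS_neg _ (by exact_mod_cast ha.ne')]

lemma constCoeff_bexpS (a : ℂ) : PowerSeries.constantCoeff (R := ℂ) (bexpS a) = 1 := by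
  rw [← coeff_zero_eq_constantCoeff]
  simp [bexpS]

lemma sylFactor_one_inv (a : ℕ) (ha : 0 < a) :
    (sylFactor 1 a)⁻¹ = PowerSeries.C (R := ℂ) ((a : ℂ))⁻¹ *
      (PowerSeries.rescale ((a : ℂ)) (PowerSeries.exp ℂ) * (bexpS (a : ℂ))⁻¹) := by
  rw [sylFactor_one_eq a ha, PowerSeries.mul_inv_rev, PowerSeries.mul_inv_rev,
    PowerSeries.C_inv, exp_rescale_inv]
  ring

lemma prod_sylFactor_inv (d : List ℕ) (h : ∀ x ∈ d, 0 < x) :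
    ((d.map (sylFactor 1)).prod)⁻¹ =
      PowerSeries.C (R := ℂ) (((d.prod : ℕ) : ℂ))⁻¹ *
        (PowerSeries.rescale ((d.sum : ℕ) : ℂ) (PowerSeries.exp ℂ) *
          ((d.map fun di => (bexpS ((di : ℕ) : ℂ))⁻¹).prod)) := by
  induction d with
  | nil => simp [rescale_zero]
  | cons a t ih =>
    simp only [List.map_cons, List.prod_cons, List.sum_cons, List.prod_cons]
    rw [PowerSeries.mul_inv_rev, ih (fun x hx => h x (List.mem_cons_of_mem a hx)),
      sylFactor_one_inv a (h a (List.mem_cons_self))]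
    push_cast
    rw [mul_inv, map_mul, ← PowerSeries.exp_mul_exp_eq_exp_add]
    ring

lemma castMap_eq (d : List ℕ) : (d.map fun di => (di : ℂ)) = List.map Nat.cast d := by
  induction d with
  | nil => rfl
  | cons a t ih => simpa using ih

/-- the polynomial part (first Sylvester wave)
`W_1(s,d) = B_{m-1}^{(m)}(s + s_m | d)/((m-1)! π_m)`. -/
theorem sylvester_wave_one (d : List ℕ) (hpos : ∀ x ∈ d, 0 < x) (hm : 1 ≤ d.length)
    (s : ℕ) :
    SylvesterWave 1 s d =
      NBern (d.length - 1) ((s : ℂ) + (d.sum : ℕ)) (d.map fun di => (di : ℂ)) /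
        ((Nat.factorial (d.length - 1) : ℂ) * (d.prod : ℕ)) := by
  have hk : kWeight 1 d = d.length := by
    simp [kWeight, Nat.one_dvd]
  rw [castMap_eq]
  rw [SylvesterWave, IsPrimitiveRoot.primitiveRoots_one, Finset.sum_singleton, one_pow, inv_one,
    one_smul, hk, prod_sylFactor_inv d hpos, NBern, List.map_map]
  have hre : PowerSeries.rescale ((s : ℂ) + ((d.sum : ℕ) : ℂ)) (PowerSeries.exp ℂ) =
      PowerSeries.rescale (s : ℂ) (PowerSeries.exp ℂ) *
        PowerSeries.rescale ((d.sum : ℕ) : ℂ) (PowerSeries.exp ℂ) :=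
    (PowerSeries.exp_mul_exp_eq_exp_add _ _).symm
  rw [hre]
  simp only [Function.comp_def]
  set B := ((d.map fun di => (bexpS ((di : ℕ) : ℂ))⁻¹).prod) with hB
  rw [show PowerSeries.rescale (s : ℂ) (PowerSeries.exp ℂ) *
      (PowerSeries.C (R := ℂ) (((d.prod : ℕ) : ℂ))⁻¹ *
        (PowerSeries.rescale ((d.sum : ℕ) : ℂ) (PowerSeries.exp ℂ) * B)) =
      PowerSeries.C (R := ℂ) (((d.prod : ℕ) : ℂ))⁻¹ *
        (PowerSeries.rescale (s : ℂ) (PowerSeries.exp ℂ) *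
          PowerSeries.rescale ((d.sum : ℕ) : ℂ) (PowerSeries.exp ℂ) * B) from by ring]
  rw [coeff_C_mul]
  have hP : ((d.prod : ℕ) : ℂ) ≠ 0 := by
    exact_mod_cast (List.prod_pos hpos).ne'
  have hF : ((d.length - 1).factorial : ℂ) ≠ 0 := by
    exact_mod_cast Nat.factorial_ne_zero _
  field_simp


end
end

section
/- Let j > 1, let d = (d_1, …, d_m) be positive integers ordered so that j divides d_1, …, d_k and j does not divide d_{k+1}, …, d_m, with 1 ≤ k ≤ m, and let ρ be a primitive j-th root of unity (so ρ^{d_i} = 1 for i ≤ k and ρ^{d_i} ≠ 1 for i > k). Then the coefficient of t^{k−1} in the formal power series t^k · ρ^{−s} e^{s t}/∏_{i=1}^m (1 − ρ^{d_i} e^{−d_i t}) equals (ρ^{−s}/((k−1)! · π_k · ∏_{i=k+1}^m (1 − ρ^{d_i}))) · ∑_{n=0}^{k−1} C(k−1, n) · B_n^{(k)}(s + s_k | (d_1, …, d_k)) · H_{k−1−n}^{(m−k)}(s_m − s_k, ρ | (d_{k+1}, …, d_m)), where s_k = d_1 + ⋯ + d_k, s_m = d_1 + ⋯ + d_m, π_k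 = d_1 ⋯ d_k. -/
open PowerSeries Finset

noncomputable section

/- ===== Auxiliary lemmas ===== -/

lemma coeff_rescale_exp (a : ℂ) (n : ℕ) :
    PowerSeries.coeff (R := ℂ) n (rescale a (exp ℂ)) = a ^ n / n.factorial := by
  rw [coeff_rescale, coeff_exp, map_div₀, map_one, map_natCast, mul_one_div]

lemma constantCoeff_rescale_exp (a : ℂ) :
    constantCoeff (R := ℂ) (rescale a (exp ℂ)) = 1 := by
  rw [← coeff_zero_eq_constantCoeff_apply, coeff_rescale_exp]
  norm_num

lemma frobS_eq (ρ : ℂ) (e : ℕ) :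
    frobS ρ e = rescale (e : ℂ) (exp ℂ) - PowerSeries.C (R := ℂ) (ρ ^ e) := by
  ext n
  rw [frobS, coeff_mk, map_sub, coeff_rescale_exp, coeff_C]
  cases n with
  | zero => simp
  | succ n => simp

lemma sylFactor_of_ne (ρ : ℂ) (d : ℕ) (h : ρ ^ d ≠ 1) :
    sylFactor ρ d = rescale (-(d : ℂ)) (exp ℂ) * frobS ρ d := by
  have : sylFactor ρ d = 1 - PowerSeries.C (R := ℂ) (ρ ^ d) * rescale (-(d : ℂ)) (exp ℂ) := by
    ext n
    rw [sylFactor, if_neg h, coeff_mk, map_sub, coeff_C_mul, coeff_rescale_exp, coeff_one]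
    cases n with
    | zero => simp
    | succ n => rw [if_neg n.succ_ne_zero, if_neg n.succ_ne_zero]; ring
  rw [this, frobS_eq, mul_sub, exp_mul_exp_eq_exp_add]
  simp [rescale_zero, mul_comm]

lemma X_mul_sylFactor (ρ : ℂ) (d : ℕ) (h : ρ ^ d = 1) :
    X * sylFactor ρ d = 1 - rescale (-(d : ℂ)) (exp ℂ) := by
  ext n
  cases n with
  | zero =>
    simp [map_sub, constantCoeff_rescale_exp]
  | succ n =>
    rw [coeff_succ_X_mul, sylFactor, if_pos h, coeff_mk, map_sub, coeff_one,
      coeff_rescale_exp, if_neg n.succ_ne_zero]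
    rw [pow_succ]
    ring

lemma X_mul_bexpS (d : ℕ) :
    X * (PowerSeries.C (R := ℂ) (d : ℂ) * bexpS (d : ℂ)) = rescale (d : ℂ) (exp ℂ) - 1 := by
  ext n
  cases n with
  | zero =>
    simp [map_sub, constantCoeff_rescale_exp]
  | succ n =>
    rw [coeff_succ_X_mul, coeff_C_mul, bexpS, coeff_mk, map_sub, coeff_one,
      coeff_rescale_exp, if_neg n.succ_ne_zero]
    rw [pow_succ]
    ring

lemma sylFactor_of_one (ρ : ℂ) (d : ℕ) (h : ρ ^ d = 1) :
    sylFactor ρ d = PowerSeries.C (R := ℂ) (d : ℂ) * bexpS (d : ℂ) * rescale (-(d : ℂ)) (exp ℂ) := by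
  have hX : (X : PowerSeries ℂ) ≠ 0 := X_ne_zero
  have key : X * (sylFactor ρ d * rescale (d : ℂ) (exp ℂ)) =
      X * (PowerSeries.C (R := ℂ) (d : ℂ) * bexpS (d : ℂ)) := by
    rw [X_mul_bexpS, ← mul_assoc, X_mul_sylFactor ρ d h, sub_mul, one_mul,
      exp_mul_exp_eq_exp_add]
    simp [rescale_zero]
  have key2 := mul_left_cancel₀ hX key
  have h3 : sylFactor ρ d * (rescale (d : ℂ) (exp ℂ) * rescale (-(d : ℂ)) (exp ℂ)) =
      PowerSeries.C (R := ℂ) (d : ℂ) * bexpS (d : ℂ) * rescale (-(d : ℂ)) (exp ℂ) := by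
    rw [← mul_assoc, key2]
  rw [exp_mul_exp_eq_exp_add, add_neg_cancel, rescale_zero] at h3
  simpa using h3

lemma constantCoeff_bexpS (d : ℂ) : constantCoeff (R := ℂ) (bexpS d) = 1 := by
  rw [← coeff_zero_eq_constantCoeff_apply, bexpS, coeff_mk]; norm_num

lemma constantCoeff_frobS (ρ : ℂ) (e : ℕ) : constantCoeff (R := ℂ) (frobS ρ e) = 1 - ρ ^ e := by
  rw [← coeff_zero_eq_constantCoeff_apply, frobS, coeff_mk]; norm_num

lemma prod_sylFactor_one (ρ : ℂ) (l : List ℕ) (h : ∀ x ∈ l, ρ ^ x = 1) :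
    (l.map (sylFactor ρ)).prod =
      PowerSeries.C (R := ℂ) ((l.prod : ℕ) : ℂ) * (l.map fun d : ℕ => bexpS (d : ℂ)).prod *
        rescale (-((l.sum : ℕ) : ℂ)) (exp ℂ) := by
  induction l with
  | nil => simp [rescale_zero]
  | cons a t ih =>
    simp only [List.map_cons, List.prod_cons, List.sum_cons,
      ih (fun x hx => h x (List.mem_cons_of_mem a hx)),
      sylFactor_of_one ρ a (h a (List.mem_cons_self))]
    rw [Nat.cast_add, neg_add, ← exp_mul_exp_eq_exp_add, Nat.cast_mul, map_mul]
    ring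

lemma prod_sylFactor_ne (ρ : ℂ) (l : List ℕ) (h : ∀ x ∈ l, ρ ^ x ≠ 1) :
    (l.map (sylFactor ρ)).prod =
      (l.map (frobS ρ)).prod * rescale (-((l.sum : ℕ) : ℂ)) (exp ℂ) := by
  induction l with
  | nil => simp [rescale_zero]
  | cons a t ih =>
    simp only [List.map_cons, List.prod_cons, List.sum_cons,
      ih (fun x hx => h x (List.mem_cons_of_mem a hx)),
      sylFactor_of_ne ρ a (h a (List.mem_cons_self))]
    rw [Nat.cast_add, neg_add, ← exp_mul_exp_eq_exp_add]
    ring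

lemma inv_prod_mul (l : List (PowerSeries ℂ)) (f : PowerSeries ℂ → PowerSeries ℂ)
    (h : ∀ x ∈ l, f x * x = 1) : (l.map f).prod * l.prod = 1 := by
  induction l with
  | nil => simp
  | cons a t ih =>
    simp only [List.map_cons, List.prod_cons]
    calc f a * (t.map f).prod * (a * t.prod)
        = (f a * a) * ((t.map f).prod * t.prod) := by ring
      _ = 1 := by
          rw [h a (List.mem_cons_self), ih (fun x hx => h x (List.mem_cons_of_mem a hx))]
          simp

lemma frobH_prod (ρ : ℂ) (l : List ℕ) :
    (l.map fun e => PowerSeries.C (R := ℂ) (1 - ρ ^ e) * (frobS ρ e)⁻¹).prod =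
      PowerSeries.C (R := ℂ) ((l.map fun e => 1 - ρ ^ e).prod) *
        (l.map fun e => (frobS ρ e)⁻¹).prod := by
  induction l with
  | nil => simp
  | cons a t ih =>
    simp only [List.map_cons, List.prod_cons, ih, map_mul]
    ring

lemma bexp_list (l : List ℕ) :
    ((l.map fun di => (di : ℂ)).map fun di => (bexpS di)⁻¹) =
      l.map fun d : ℕ => (bexpS (d : ℂ))⁻¹ := by
  induction l with
  | nil => simp
  | cons a t ih => simp_all

lemma alg_red (a f p c T : ℂ) (hf : f ≠ 0) (hp : p ≠ 0) (hc : c ≠ 0) :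
    a / (f * p * c) * (f * c * T) = a * (p⁻¹ * T) := by
  field_simp

lemma list_prod_ne_zero (l : List ℂ) (h : ∀ x ∈ l, x ≠ 0) : l.prod ≠ 0 := by
  induction l with
  | nil => simp
  | cons a t ih =>
    simp only [List.prod_cons]
    exact mul_ne_zero (h a (List.mem_cons_self))
      (ih fun x hx => h x (List.mem_cons_of_mem a hx))

/-- the coefficient of `t^{k-1}` in
`t^k ρ^{-s} e^{st}/∏ (1 - ρ^{d_i} e^{-d_i t})` as a mixed Bernoulli–Eulerian sum.
The list is `d1 ++ d2` with `d1` the elements divisible by `j` and `d2` the rest. -/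
theorem wave_coefficient_mixed (j : ℕ) (hj : 1 < j) (d1 d2 : List ℕ)
    (hk : 1 ≤ d1.length)
    (h1 : ∀ x ∈ d1, 0 < x ∧ j ∣ x) (h2 : ∀ x ∈ d2, 0 < x ∧ ¬ j ∣ x)
    (ρ : ℂ) (hρ : IsPrimitiveRoot ρ j) (s : ℕ) :
    PowerSeries.coeff (R := ℂ) (d1.length - 1)
        ((ρ ^ s)⁻¹ • (PowerSeries.rescale (s : ℂ) (PowerSeries.exp ℂ) *
          (((d1 ++ d2).map (sylFactor ρ)).prod)⁻¹)) =
      (ρ ^ s)⁻¹ /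
          ((Nat.factorial (d1.length - 1) : ℂ) * (d1.prod : ℕ) *
            (d2.map fun di => 1 - ρ ^ di).prod) *
        ∑ n ∈ Finset.range d1.length,
          (Nat.choose (d1.length - 1) n : ℂ) *
            NBern n ((s : ℂ) + (d1.sum : ℕ)) (d1.map fun di => (di : ℂ)) *
            FrobH (d1.length - 1 - n) ((d2.sum : ℕ)) ρ d2 := by
  set k := d1.length with hkdef
  have hρ1 : ∀ x ∈ d1, ρ ^ x = 1 := fun x hx => (hρ.pow_eq_one_iff_dvd x).mpr (h1 x hx).2
  have hρ2 : ∀ x ∈ d2, ρ ^ x ≠ 1 := fun x hx h => (h2 x hx).2 ((hρ.pow_eq_one_iff_dvd x).mp h)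
  set π : ℂ := ((d1.prod : ℕ) : ℂ) with hπdef
  set c : ℂ := (d2.map fun di => 1 - ρ ^ di).prod with hcdef
  have hπ : π ≠ 0 := by
    rw [hπdef, Nat.cast_ne_zero]
    exact (List.prod_pos fun a ha => (h1 a ha).1).ne'
  have hc : c ≠ 0 := by
    refine list_prod_ne_zero _ ?_
    intro x hx
    obtain ⟨e, he, rfl⟩ := List.mem_map.mp hx
    exact sub_ne_zero_of_ne (Ne.symm (hρ2 e he))
  set B : PowerSeries ℂ := (d1.map fun d : ℕ => bexpS (d : ℂ)).prod with hBdef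
  set Binv : PowerSeries ℂ := (d1.map fun d : ℕ => (bexpS (d : ℂ))⁻¹).prod with hBinvdef
  set F : PowerSeries ℂ := (d2.map (frobS ρ)).prod with hFdef
  set Finv : PowerSeries ℂ := (d2.map fun e => (frobS ρ e)⁻¹).prod with hFinvdef
  set S1 : ℂ := ((d1.sum : ℕ) : ℂ) with hS1def
  set S2 : ℂ := ((d2.sum : ℕ) : ℂ) with hS2def
  -- the product factorization
  have hP : ((d1 ++ d2).map (sylFactor ρ)).prod =
      PowerSeries.C (R := ℂ) π * B * rescale (-S1) (exp ℂ) * (F * rescale (-S2) (exp ℂ)) := by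
    rw [List.map_append, List.prod_append, prod_sylFactor_one ρ d1 hρ1,
      prod_sylFactor_ne ρ d2 hρ2]
  -- cancellation lemmas
  have hBB : Binv * B = 1 := by
    rw [hBinvdef, hBdef, show (d1.map fun d : ℕ => (bexpS (d : ℂ))⁻¹)
        = ((d1.map fun d : ℕ => bexpS (d : ℂ)).map fun f => f⁻¹) by rw [List.map_map]; rfl]
    refine inv_prod_mul _ _ ?_
    intro x hx
    obtain ⟨d, hd, rfl⟩ := List.mem_map.mp hx
    exact PowerSeries.inv_mul_cancel _ (by rw [constantCoeff_bexpS]; exact one_ne_zero)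
  have hFF : Finv * F = 1 := by
    rw [hFinvdef, hFdef, show (d2.map fun e => (frobS ρ e)⁻¹)
        = ((d2.map (frobS ρ)).map fun f => f⁻¹) by rw [List.map_map]; rfl]
    refine inv_prod_mul _ _ ?_
    intro x hx
    obtain ⟨e, he, rfl⟩ := List.mem_map.mp hx
    refine PowerSeries.inv_mul_cancel _ ?_
    rw [constantCoeff_frobS]
    exact sub_ne_zero_of_ne (Ne.symm (hρ2 e he))
  -- constant coefficient of the product is nonzero
  have hB1 : constantCoeff (R := ℂ) B = 1 := by
    rw [hBdef, map_list_prod, List.map_map]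
    refine List.prod_eq_one ?_
    intro x hx
    obtain ⟨d, hd, rfl⟩ := List.mem_map.mp hx
    exact constantCoeff_bexpS _
  have hFc : constantCoeff (R := ℂ) F = c := by
    rw [hFdef, map_list_prod, List.map_map, hcdef]
    congr 1
  have hP0 : constantCoeff (R := ℂ) (((d1 ++ d2).map (sylFactor ρ)).prod) ≠ 0 := by
    rw [hP]
    simp only [map_mul, hB1, hFc, constantCoeff_C, constantCoeff_rescale_exp]
    simpa using mul_ne_zero hπ hc
  -- the inverse
  have hPinv : (((d1 ++ d2).map (sylFactor ρ)).prod)⁻¹ =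
      PowerSeries.C (R := ℂ) π⁻¹ * Binv * rescale S1 (exp ℂ) * (Finv * rescale S2 (exp ℂ)) := by
    rw [PowerSeries.inv_eq_iff_mul_eq_one hP0, hP]
    calc PowerSeries.C (R := ℂ) π⁻¹ * Binv * rescale S1 (exp ℂ) * (Finv * rescale S2 (exp ℂ)) *
          (PowerSeries.C (R := ℂ) π * B * rescale (-S1) (exp ℂ) * (F * rescale (-S2) (exp ℂ)))
        = (PowerSeries.C (R := ℂ) π⁻¹ * PowerSeries.C (R := ℂ) π) * (Binv * B) * (Finv * F) *
            ((rescale S1 (exp ℂ) * rescale (-S1) (exp ℂ)) *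
              (rescale S2 (exp ℂ) * rescale (-S2) (exp ℂ))) := by ring
      _ = 1 := by
          rw [← map_mul, inv_mul_cancel₀ hπ, hBB, hFF, exp_mul_exp_eq_exp_add,
            exp_mul_exp_eq_exp_add, add_neg_cancel, rescale_zero]
          simp
  set G1 : PowerSeries ℂ := rescale ((s : ℂ) + S1) (exp ℂ) * Binv with hG1def
  set G2 : PowerSeries ℂ := rescale S2 (exp ℂ) * Finv with hG2def
  -- rewrite the full series
  have hSeries : rescale (s : ℂ) (exp ℂ) * (((d1 ++ d2).map (sylFactor ρ)).prod)⁻¹ =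
      PowerSeries.C (R := ℂ) π⁻¹ * (G1 * G2) := by
    rw [hPinv, hG1def, hG2def]
    calc rescale (s : ℂ) (exp ℂ) *
          (PowerSeries.C (R := ℂ) π⁻¹ * Binv * rescale S1 (exp ℂ) * (Finv * rescale S2 (exp ℂ)))
        = PowerSeries.C (R := ℂ) π⁻¹ *
            ((rescale (s : ℂ) (exp ℂ) * rescale S1 (exp ℂ) * Binv) *
              (rescale S2 (exp ℂ) * Finv)) := by ring
      _ = _ := by rw [exp_mul_exp_eq_exp_add]
  -- LHS
  have hLHS : PowerSeries.coeff (R := ℂ) (k - 1)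
      ((ρ ^ s)⁻¹ • (rescale (s : ℂ) (exp ℂ) * (((d1 ++ d2).map (sylFactor ρ)).prod)⁻¹)) =
      (ρ ^ s)⁻¹ * (π⁻¹ *
        ∑ n ∈ Finset.range k, PowerSeries.coeff (R := ℂ) n G1 *
          PowerSeries.coeff (R := ℂ) (k - 1 - n) G2) := by
    rw [map_smul, smul_eq_mul, hSeries, coeff_C_mul, coeff_mul,
      Finset.Nat.sum_antidiagonal_eq_sum_range_succ_mk,
      show (k - 1).succ = k from by omega]
  rw [hLHS]
  -- NBern and FrobH in terms of G1 and G2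
  have hNB : ∀ n, NBern n ((s : ℂ) + S1) (d1.map fun di => (di : ℂ)) =
      (n.factorial : ℂ) * PowerSeries.coeff (R := ℂ) n G1 := by
    intro n
    rw [NBern, bexp_list, hG1def, hBinvdef]
  have hFH : ∀ m, FrobH m S2 ρ d2 = (m.factorial : ℂ) * (c * PowerSeries.coeff (R := ℂ) m G2) := by
    intro m
    rw [FrobH, frobH_prod, hG2def, hcdef]
    rw [show rescale S2 (exp ℂ) *
        (PowerSeries.C (R := ℂ) ((d2.map fun e => 1 - ρ ^ e).prod) *
          (d2.map fun e => (frobS ρ e)⁻¹).prod)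
        = PowerSeries.C (R := ℂ) ((d2.map fun e => 1 - ρ ^ e).prod) *
          (rescale S2 (exp ℂ) * (d2.map fun e => (frobS ρ e)⁻¹).prod) by ring,
      coeff_C_mul, hFinvdef]
  -- RHS sum simplification
  have hsum : ∑ n ∈ Finset.range k,
      (Nat.choose (k - 1) n : ℂ) * NBern n ((s : ℂ) + S1) (d1.map fun di => (di : ℂ)) *
        FrobH (k - 1 - n) S2 ρ d2 =
      ((k - 1).factorial : ℂ) * c *
        ∑ n ∈ Finset.range k, PowerSeries.coeff (R := ℂ) n G1 * PowerSeries.coeff (R := ℂ) (k - 1 - n) G2 := by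
    rw [Finset.mul_sum]
    refine Finset.sum_congr rfl ?_
    intro n hn
    have hn' : n ≤ k - 1 := by
      have := Finset.mem_range.mp hn; omega
    rw [hNB n, hFH (k - 1 - n)]
    have hfact : ((k - 1).choose n : ℂ) * (n.factorial : ℂ) * ((k - 1 - n).factorial : ℂ) =
        ((k - 1).factorial : ℂ) := by
      rw [← Nat.cast_mul, ← Nat.cast_mul, Nat.choose_mul_factorial_mul_factorial hn']
    calc (↑((k - 1).choose n)) * ((n.factorial : ℂ) * PowerSeries.coeff (R := ℂ) n G1) *
          (((k - 1 - n).factorial : ℂ) * (c * PowerSeries.coeff (R := ℂ) (k - 1 - n) G2))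
        = ((↑((k - 1).choose n)) * (n.factorial : ℂ) * ((k - 1 - n).factorial : ℂ)) *
            (c * (PowerSeries.coeff (R := ℂ) n G1 * PowerSeries.coeff (R := ℂ) (k - 1 - n) G2)) := by ring
      _ = _ := by rw [hfact]; ring
  rw [hsum]
  have hfne : (((k - 1).factorial : ℕ) : ℂ) ≠ 0 := by
    exact_mod_cast Nat.cast_ne_zero.mpr (Nat.factorial_ne_zero _)
  rw [alg_red _ _ _ _ _ hfne hπ hc]
end
end

section
/- Let j = ∏_k p_k^{α_k} be the factorization of a positive integer j into powers of distinct primes p_k. Then for every integer s: Ψ̄_j(s) = ∏_k p_k^{α_k − 1} · Ψ̄_{p_k}(s / p_k^{α_k − 1}), where a factor Ψ̄_{p_k}(s / p_k^{α_k − 1}) is taken to be 0 whenever p_k^{α_k − 1} does not divide s. -/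
open PowerSeries Finset

noncomputable section

section Aux

open ArithmeticFunction

lemma sum_nthRootsFinset_zpow (s : ℤ) {n : ℕ} (hn : 0 < n) :
    ∑ ρ ∈ Polynomial.nthRootsFinset n (1 : ℂ), ρ ^ s = if (n : ℤ) ∣ s then (n : ℂ) else 0 := by
  obtain ⟨z, hζ⟩ : ∃ z : ℂ, IsPrimitiveRoot z n := ⟨_, Complex.isPrimitiveRoot_exp n hn.ne'⟩
  by_cases h : (n : ℤ) ∣ s
  · rw [if_pos h]
    obtain ⟨t, rfl⟩ := h
    rw [Finset.sum_congr rfl fun ρ hρ => ?_, Finset.sum_const, hζ.card_nthRootsFinset,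
      nsmul_eq_mul, mul_one]
    rw [zpow_mul, zpow_natCast, (Polynomial.mem_nthRootsFinset hn (1 : ℂ)).mp hρ, one_zpow]
  · rw [if_neg h]
    have hζ0 : z ≠ 0 := hζ.ne_zero hn.ne'
    have key : ∑ ρ ∈ Polynomial.nthRootsFinset n (1 : ℂ), (z * ρ) ^ s
        = ∑ ρ ∈ Polynomial.nthRootsFinset n (1 : ℂ), ρ ^ s := by
      refine Finset.sum_nbij' (fun ρ => z * ρ) (fun ρ => z⁻¹ * ρ) ?_ ?_ ?_ ?_ ?_
      · intro a ha
        rw [Polynomial.mem_nthRootsFinset hn] at ha ⊢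
        rw [mul_pow, hζ.pow_eq_one, one_mul, ha]
      · intro a ha
        rw [Polynomial.mem_nthRootsFinset hn] at ha ⊢
        rw [mul_pow, inv_pow, hζ.pow_eq_one, inv_one, one_mul, ha]
      · intro a _; exact inv_mul_cancel_left₀ hζ0 a
      · intro a _; exact mul_inv_cancel_left₀ hζ0 a
      · intro a _; rfl
    simp_rw [mul_zpow, ← Finset.mul_sum] at key
    have hζs : z ^ s ≠ 1 := fun e => h ((hζ.zpow_eq_one_iff_dvd s).mp e)
    rcases mul_eq_zero.mp
        (by linear_combination key :
          (z ^ s - 1) * ∑ ρ ∈ Polynomial.nthRootsFinset n (1 : ℂ), ρ ^ s = 0) with h1 | h2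
    · exact absurd (sub_eq_zero.mp h1) hζs
    · exact h2

lemma sum_divisors_primeCirculator (s : ℤ) : ∀ (n : ℕ), 0 < n →
    ∑ d ∈ n.divisors, primeCirculator d s = if (n : ℤ) ∣ s then (n : ℂ) else 0 := by
  intro n hn
  have hζ := Complex.isPrimitiveRoot_exp n hn.ne'
  rw [← sum_nthRootsFinset_zpow s hn, IsPrimitiveRoot.nthRoots_one_eq_biUnion_primitiveRoots,
    Finset.sum_biUnion fun a _ b _ hab => IsPrimitiveRoot.disjoint hab]
  rfl

def ramG (s : ℤ) : ArithmeticFunction ℂ :=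
  ⟨fun d => if (d : ℤ) ∣ s then (d : ℂ) else 0, by simp⟩

lemma ramG_apply (s : ℤ) (d : ℕ) : ramG s d = if (d : ℤ) ∣ s then (d : ℂ) else 0 := rfl

lemma ramG_mult (s : ℤ) : (ramG s).IsMultiplicative := by
  constructor
  · simp [ramG_apply]
  · intro m n hmn
    have hco : IsCoprime (m : ℤ) (n : ℤ) := Nat.isCoprime_iff_coprime.mpr hmn
    have key : ((m * n : ℕ) : ℤ) ∣ s ↔ ((m : ℤ) ∣ s ∧ (n : ℤ) ∣ s) := by
      push_cast
      exact ⟨fun h => ⟨(dvd_mul_right _ _).trans h, (dvd_mul_left _ _).trans h⟩,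
        fun h => hco.mul_dvd h.1 h.2⟩
    rw [ramG_apply, ramG_apply, ramG_apply]
    by_cases hm : (m : ℤ) ∣ s <;> by_cases hn2 : (n : ℤ) ∣ s
    · rw [if_pos (key.mpr ⟨hm, hn2⟩), if_pos hm, if_pos hn2]; push_cast; ring
    · rw [if_neg (fun hd => hn2 (key.mp hd).2), if_neg hn2, mul_zero]
    · rw [if_neg (fun hd => hm (key.mp hd).1), if_neg hm, zero_mul]
    · rw [if_neg (fun hd => hm (key.mp hd).1), if_neg hm, zero_mul]

lemma primeCirculator_eq_ram (s : ℤ) {n : ℕ} (hn : 0 < n) :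
    primeCirculator n s =
      (((ArithmeticFunction.moebius : ArithmeticFunction ℤ) : ArithmeticFunction ℂ) *
        ramG s) n := by
  have := (ArithmeticFunction.sum_eq_iff_sum_mul_moebius_eq
    (f := fun d => primeCirculator d s)
    (g := fun n => if (n : ℤ) ∣ s then (n : ℂ) else 0)).mp
    (fun m hm => sum_divisors_primeCirculator s m hm) n hn
  rw [← this, ArithmeticFunction.mul_apply]
  refine Finset.sum_congr rfl fun x _ => ?_
  rw [ArithmeticFunction.intCoe_apply, ramG_apply]

lemma circ_prime_pow (s : ℤ) {p : ℕ} (hp : p.Prime) {α : ℕ} (hα : 0 < α) :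
    primeCirculator (p ^ α) s =
      (if (p : ℤ) ^ α ∣ s then ((p : ℂ)) ^ α else 0) -
        (if (p : ℤ) ^ (α - 1) ∣ s then ((p : ℂ)) ^ (α - 1) else 0) := by
  obtain ⟨β, rfl⟩ : ∃ β, α = β + 1 := ⟨α - 1, (Nat.succ_pred_eq_of_pos hα).symm⟩
  have h1 := sum_divisors_primeCirculator s (p ^ (β + 1)) (pow_pos hp.pos _)
  have h2 := sum_divisors_primeCirculator s (p ^ β) (pow_pos hp.pos _)
  rw [Nat.sum_divisors_prime_pow hp, Finset.sum_range_succ] at h1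
  rw [Nat.sum_divisors_prime_pow hp] at h2
  rw [h2] at h1
  simp only [Nat.cast_pow, Nat.add_sub_cancel] at h1 ⊢
  linear_combination h1

end Aux

/-- multiplicative reduction of the prime radical circulator to its
prime components. -/
theorem primeCirculator_factorization (j : ℕ) (hj : 0 < j) (s : ℤ) :
    primeCirculator j s =
      ∏ p ∈ j.primeFactors,
        (p : ℂ) ^ (j.factorization p - 1) *
          (if (p : ℤ) ^ (j.factorization p - 1) ∣ s then
            primeCirculator p (s / (p : ℤ) ^ (j.factorization p - 1))
          else 0) := by
  have hF := (ArithmeticFunction.isMultiplicative_moebius.intCast (R := ℂ)).mul (ramG_mult s)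
  rw [primeCirculator_eq_ram s hj,
    ArithmeticFunction.IsMultiplicative.multiplicative_factorization _ hF hj.ne',
    Finsupp.prod, Nat.support_factorization]
  refine Finset.prod_congr rfl fun p hp => ?_
  have hpp : p.Prime := Nat.prime_of_mem_primeFactors hp
  set α := j.factorization p with hαdef
  have hα : 0 < α := Nat.Prime.factorization_pos_of_dvd hpp hj.ne'
    (Nat.dvd_of_mem_primeFactors hp)
  rw [← primeCirculator_eq_ram s (pow_pos hpp.pos α), circ_prime_pow s hpp hα]
  obtain ⟨β, hβ⟩ : ∃ β, α = β + 1 := ⟨α - 1, (Nat.succ_pred_eq_of_pos hα).symm⟩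
  rw [hβ]
  simp only [Nat.add_sub_cancel]
  have hpne : ((p : ℤ)) ^ β ≠ 0 := pow_ne_zero _ (by exact_mod_cast hpp.pos.ne')
  by_cases hd : (p : ℤ) ^ β ∣ s
  · obtain ⟨t, ht⟩ := hd
    have hds : (p : ℤ) ^ β ∣ s := Dvd.intro t ht.symm
    have hdivt : s / (p : ℤ) ^ β = t := by rw [ht, Int.mul_ediv_cancel_left _ hpne]
    have hcp := circ_prime_pow t hpp (α := 1) one_pos
    simp only [pow_one, Nat.sub_self, pow_zero, one_dvd, if_true] at hcp
    have hiff : (p : ℤ) ^ (β + 1) ∣ s ↔ (p : ℤ) ∣ t := by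
      rw [ht, pow_succ]
      exact mul_dvd_mul_iff_left hpne
    rw [if_pos hds, if_pos hds, hdivt, hcp]
    by_cases h2 : (p : ℤ) ∣ t
    · rw [if_pos (hiff.mpr h2), if_pos h2, pow_succ]; ring
    · rw [if_neg (fun h => h2 (hiff.mp h)), if_neg h2]; ring
  · rw [if_neg hd, if_neg (fun h => hd ((pow_dvd_pow _ (Nat.le_succ β)).trans h)), if_neg hd]
    ring
end
end
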